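/- arXiv:1808.05799 — 2 statements merged into one kernel-verified Lean document; each statement's English description precedes it below -/
import Mathlib

section
/- Let G be a locally compact group with right Haar measure λ, Φ a Young function, a ∈ G, w a weight with w, w⁻¹ ∈ L^∞(G), K a compact set, E ⊆ K Borel, f bounded measurable supported in K, and n ∈ ℕ. Then N_Φ(T_{a,w}^n (f χ_E)) = N_Φ(φ_n · f · χ_E), where φ_n(x) = ∏_{j=1}^n w(x a^j). In particular N_Φ(T_{a,w}^n (f χ_E)) ≤ ‖f‖_∞ · ‖φ_n|_E‖_∞ / Φ⁻¹(1/λ(E)). -/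
open MeasureTheory Filter Set Topology

/-- A Young function: continuous, even, convex, vanishing at 0, positive on positives,
tending to infinity. -/
structure IsYoung (Φ : ℝ → ℝ) : Prop where
  continuous : Continuous Φ
  even : ∀ t, Φ (-t) = Φ t
  convex : ConvexOn ℝ Set.univ Φ
  zero : Φ 0 = 0
  pos : ∀ t : ℝ, 0 < t → 0 < Φ t
  tendsto_top : Tendsto Φ atTop atTop

/-- The complementary Young function Ψ(y) = sup { x|y| − Φ(x) : x ≥ 0 }. -/
noncomputable def complementaryYoung (Φ : ℝ → ℝ) (y : ℝ) : ℝ :=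
  sSup {z : ℝ | ∃ x : ℝ, 0 ≤ x ∧ z = x * |y| - Φ x}

/-- Generalized inverse of a Young function on [0, ∞). -/
noncomputable def youngInv (Φ : ℝ → ℝ) (t : ℝ) : ℝ :=
  sSup {s : ℝ | 0 ≤ s ∧ Φ s ≤ t}

/-- The Luxemburg norm N_Φ(f) = inf { k > 0 : ∫ Φ(|f|/k) dμ ≤ 1 }. -/
noncomputable def luxNorm {G : Type*} [MeasurableSpace G] (Φ : ℝ → ℝ) (μ : Measure G)
    (f : G → ℂ) : ℝ :=
  sInf {k : ℝ | 0 < k ∧ ∫⁻ x, ENNReal.ofReal (Φ (‖f x‖ / k)) ∂μ ≤ 1}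

/-- Membership in the Orlicz space L^Φ(G). -/
def MemOrlicz {G : Type*} [MeasurableSpace G] (Φ : ℝ → ℝ) (μ : Measure G)
    (f : G → ℂ) : Prop :=
  Measurable f ∧ ∃ α : ℝ, 0 < α ∧ ∫⁻ x, ENNReal.ofReal (Φ (α * ‖f x‖)) ∂μ < ⊤

/-- The weighted translation operator T_{a,w} f (x) = w(x) f(x a⁻¹). -/
noncomputable def wT {G : Type*} [Group G] (a : G) (w : G → ℝ) (f : G → ℂ) : G → ℂ :=
  fun x => (w x : ℂ) * f (x * a⁻¹)

/-- The operator S_{a,w} h (x) = h(xa) / w(xa). -/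
noncomputable def wS {G : Type*} [Group G] (a : G) (w : G → ℝ) (h : G → ℂ) : G → ℂ :=
  fun x => h (x * a) / (w (x * a) : ℂ)

/-- φ_n(x) = ∏_{j=1}^n w(x a^j). -/
noncomputable def phiW {G : Type*} [Group G] (a : G) (w : G → ℝ) (n : ℕ) (x : G) : ℝ :=
  ∏ j ∈ Finset.Icc 1 n, w (x * a ^ j)

/-- φ̃_n(x) = (∏_{j=0}^{n-1} w(x a^{-j}))⁻¹. -/
noncomputable def phiTW {G : Type*} [Group G] (a : G) (w : G → ℝ) (n : ℕ) (x : G) : ℝ :=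
  (∏ j ∈ Finset.range n, w (x * a ^ (-(j : ℤ))))⁻¹

/-- a is aperiodic: for every compact K there is M with K ∩ K a^{±n} = ∅ for all n > M. -/
def AperiodicElem {G : Type*} [Group G] [TopologicalSpace G] (a : G) : Prop :=
  ∀ K : Set G, IsCompact K → ∃ M : ℕ, ∀ n : ℕ, M < n →
    K ∩ ((fun x => x * a ^ n) '' K) = ∅ ∧ K ∩ ((fun x => x * (a ^ n)⁻¹) '' K) = ∅

/-- Δ₂-regularity of a Young function relative to the (non)compactness of G. -/
def Delta2Regular (G : Type*) [TopologicalSpace G] (Φ : ℝ → ℝ) : Prop :=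
  (CompactSpace G → ∃ M : ℝ, 0 < M ∧ ∃ t₀ : ℝ, 0 < t₀ ∧
      ∀ t : ℝ, t₀ ≤ t → Φ (2 * t) ≤ M * Φ t) ∧
  (¬ CompactSpace G → ∃ M : ℝ, 0 < M ∧ ∀ t : ℝ, 0 < t → Φ (2 * t) ≤ M * Φ t)

/-- Topological transitivity of T on L^Φ(G). -/
def OrliczTransitive {G : Type*} [MeasurableSpace G] (Φ : ℝ → ℝ) (μ : Measure G)
    (T : (G → ℂ) → (G → ℂ)) : Prop :=
  ∀ f g : G → ℂ, MemOrlicz Φ μ f → MemOrlicz Φ μ g → ∀ ε : ℝ, 0 < ε →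
    ∃ h : G → ℂ, MemOrlicz Φ μ h ∧ ∃ n : ℕ,
      luxNorm Φ μ (h - f) < ε ∧ luxNorm Φ μ (T^[n] h - g) < ε

/-- Topological mixing of T on L^Φ(G). -/
def OrliczMixing {G : Type*} [MeasurableSpace G] (Φ : ℝ → ℝ) (μ : Measure G)
    (T : (G → ℂ) → (G → ℂ)) : Prop :=
  ∀ f g : G → ℂ, MemOrlicz Φ μ f → MemOrlicz Φ μ g → ∀ ε : ℝ, 0 < ε →
    ∃ N : ℕ, ∀ n : ℕ, N ≤ n → ∃ h : G → ℂ, MemOrlicz Φ μ h ∧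
      luxNorm Φ μ (h - f) < ε ∧ luxNorm Φ μ (T^[n] h - g) < ε

/-- Recurrence of T on L^Φ(G). -/
def OrliczRecurrent {G : Type*} [MeasurableSpace G] (Φ : ℝ → ℝ) (μ : Measure G)
    (T : (G → ℂ) → (G → ℂ)) : Prop :=
  ∀ f : G → ℂ, MemOrlicz Φ μ f → ∀ ε : ℝ, 0 < ε →
    ∃ n : ℕ, 1 ≤ n ∧ ∃ h : G → ℂ, MemOrlicz Φ μ h ∧
      luxNorm Φ μ (h - f) < ε ∧ luxNorm Φ μ (T^[n] h - f) < ε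

/-- Topological multiple recurrence of T on L^Φ(G). -/
def OrliczMultiplyRecurrent {G : Type*} [MeasurableSpace G] (Φ : ℝ → ℝ) (μ : Measure G)
    (T : (G → ℂ) → (G → ℂ)) : Prop :=
  ∀ L : ℕ, 1 ≤ L → ∀ f : G → ℂ, MemOrlicz Φ μ f → ∀ ε : ℝ, 0 < ε →
    ∃ n : ℕ, 1 ≤ n ∧ ∃ h : G → ℂ, MemOrlicz Φ μ h ∧
      luxNorm Φ μ (h - f) < ε ∧
      ∀ l : ℕ, 1 ≤ l → l ≤ L → luxNorm Φ μ (T^[l * n] h - f) < ε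

/-- Density of the set of periodic points of T in L^Φ(G). -/
def OrliczDensePeriodic {G : Type*} [MeasurableSpace G] (Φ : ℝ → ℝ) (μ : Measure G)
    (T : (G → ℂ) → (G → ℂ)) : Prop :=
  ∀ f : G → ℂ, MemOrlicz Φ μ f → ∀ ε : ℝ, 0 < ε →
    ∃ g : G → ℂ, MemOrlicz Φ μ g ∧ (∃ n : ℕ, 1 ≤ n ∧ T^[n] g = g) ∧
      luxNorm Φ μ (g - f) < ε

/-- The weight condition for transitivity/recurrence. -/
def WeightCondition {G : Type*} [Group G] [TopologicalSpace G] [MeasurableSpace G]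
    (μ : Measure G) (a : G) (w : G → ℝ) : Prop :=
  ∀ K : Set G, IsCompact K → 0 < μ K →
    ∃ E : ℕ → Set G, ∃ n : ℕ → ℕ, StrictMono n ∧
      (∀ k, MeasurableSet (E k) ∧ E k ⊆ K) ∧
      Tendsto (fun k => μ (E k)) atTop (nhds (μ K)) ∧
      ∀ ε : ℝ, 0 < ε → ∃ N : ℕ, ∀ k, N ≤ k → ∀ x ∈ E k,
        phiW a w (n k) x < ε ∧ phiTW a w (n k) x < ε

/-- The weight condition for chaos (density of periodic points). -/
def ChaosWeightCondition {G : Type*} [Group G] [TopologicalSpace G] [MeasurableSpace G]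
    (μ : Measure G) (a : G) (w : G → ℝ) : Prop :=
  ∀ K : Set G, IsCompact K → 0 < μ K →
    ∃ E : ℕ → Set G, ∃ n : ℕ → ℕ, StrictMono n ∧
      (∀ k, MeasurableSet (E k) ∧ E k ⊆ K) ∧
      Tendsto (fun k => μ (E k)) atTop (nhds (μ K)) ∧
      ∀ ε : ℝ, 0 < ε → ∃ N : ℕ, ∀ k, N ≤ k → ∀ x ∈ E k,
        (∑' l : ℕ, phiW a w ((l + 1) * n k) x) +
          (∑' l : ℕ, phiTW a w ((l + 1) * n k) x) < ε

/-! Right translation by `aⁿ` preserves the Luxemburg modular of a right-invariant measure, and it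
turns `T_{a,w}^n g` into `φ_n · g`, since iterating `T_{a,w}` collects the weights `w(x a^j)`,
`1 ≤ j ≤ n`, along the orbit. For the bound, a function bounded by `M` and vanishing off a set of
measure `m ∈ (0, ∞)` has modular at most `Φ(M/k) m ≤ Φ(Φ⁻¹(1/m)) m ≤ 1` at every level
`k > M / Φ⁻¹(1/m)`. -/

section Young

variable {Φ : ℝ → ℝ}

lemma IsYoung.nonneg (hΦ : IsYoung Φ) {t : ℝ} (ht : 0 ≤ t) : 0 ≤ Φ t :=
  ht.eq_or_lt.elim (fun h => h ▸ hΦ.zero.ge) fun h => (hΦ.pos t h).le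

lemma IsYoung.monotoneOn (hΦ : IsYoung Φ) : MonotoneOn Φ (Ici 0) := by
  intro u hu v hv huv
  rcases (mem_Ici.mp hu).eq_or_lt with rfl | hu
  · exact hΦ.zero.le.trans (hΦ.nonneg hv)
  · exact hΦ.convex.le_right_of_left_le'' (mem_univ 0) (mem_univ v) hu huv
      (hΦ.zero.le.trans (hΦ.nonneg hu.le))

lemma IsYoung.bddAbove_sublevel (hΦ : IsYoung Φ) (t : ℝ) :
    BddAbove {s : ℝ | 0 ≤ s ∧ Φ s ≤ t} := by
  obtain ⟨B, hB⟩ := (hΦ.tendsto_top.eventually_gt_atTop t).exists_forall_of_atTop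
  exact ⟨B, fun s hs => not_lt.mp fun hBs => (hB s hBs.le).not_ge hs.2⟩

lemma IsYoung.youngInv_mem (hΦ : IsYoung Φ) {t : ℝ} (ht : 0 ≤ t) :
    0 ≤ youngInv Φ t ∧ Φ (youngInv Φ t) ≤ t :=
  (isClosed_Ici.inter (isClosed_le hΦ.continuous continuous_const)).csSup_mem
    ⟨0, mem_Ici.2 le_rfl, hΦ.zero.trans_le ht⟩ (hΦ.bddAbove_sublevel t)

lemma IsYoung.youngInv_pos (hΦ : IsYoung Φ) {t : ℝ} (ht : 0 < t) : 0 < youngInv Φ t := by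
  have hsmall : ∀ᶠ s in 𝓝 0, Φ s < t :=
    (hΦ.continuous.tendsto 0).eventually_lt_const (hΦ.zero.trans_lt ht)
  obtain ⟨s, hΦs, hs⟩ :=
    ((hsmall.filter_mono nhdsWithin_le_nhds).and (self_mem_nhdsWithin (s := Ioi 0))).exists
  exact hs.trans_le (le_csSup (hΦ.bddAbove_sublevel t) ⟨hs.le, hΦs.le⟩)

end Young

section Luxemburg

variable {G : Type*} [MeasurableSpace G] {Φ : ℝ → ℝ} {μ : Measure G}

lemma luxNorm_le_of_forall_gt {f : G → ℂ} {k₀ : ℝ} (hk₀ : 0 ≤ k₀)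
    (h : ∀ k, k₀ < k → ∫⁻ x, ENNReal.ofReal (Φ (‖f x‖ / k)) ∂μ ≤ 1) : luxNorm Φ μ f ≤ k₀ :=
  le_of_forall_gt_imp_ge_of_dense fun k hk =>
    csInf_le ⟨0, fun _ hk => hk.1.le⟩ ⟨hk₀.trans_lt hk, h k hk⟩

lemma luxNorm_le_of_norm_le (hΦ : IsYoung Φ) {E : Set G} (hE : MeasurableSet E)
    (hE_fin : μ E ≠ ⊤) {f : G → ℂ} {M : ℝ} (hM : 0 ≤ M) (hf : ∀ x ∈ E, ‖f x‖ ≤ M)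
    (hfE : ∀ x ∉ E, f x = 0) : luxNorm Φ μ f ≤ M / youngInv Φ (1 / (μ E).toReal) := by
  have hk₀ : 0 ≤ M / youngInv Φ (1 / (μ E).toReal) :=
    div_nonneg hM (hΦ.youngInv_mem (by positivity)).1
  refine luxNorm_le_of_forall_gt hk₀ fun k hk => ?_
  have hk0 : 0 < k := hk₀.trans_lt hk
  calc ∫⁻ x, ENNReal.ofReal (Φ (‖f x‖ / k)) ∂μ
      ≤ ∫⁻ x, E.indicator (fun _ => ENNReal.ofReal (Φ (M / k))) x ∂μ := by
        refine lintegral_mono fun x => ?_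
        by_cases hx : x ∈ E
        · rw [indicator_of_mem hx]
          exact ENNReal.ofReal_le_ofReal <| hΦ.monotoneOn (mem_Ici.2 (by positivity))
            (mem_Ici.2 (by positivity)) (div_le_div_of_nonneg_right (hf x hx) hk0.le)
        · simp [hfE x hx, hΦ.zero]
    _ = ENNReal.ofReal (Φ (M / k) * (μ E).toReal) := by
        rw [lintegral_indicator_const hE, ENNReal.ofReal_mul (hΦ.nonneg (by positivity)),
          ENNReal.ofReal_toReal hE_fin]
    _ ≤ 1 := by
        rw [ENNReal.ofReal_le_one]
        rcases ENNReal.toReal_nonneg.eq_or_lt with hE0 | hE0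
        · rw [← hE0, mul_zero]
          exact zero_le_one
        have hs := hΦ.youngInv_pos (one_div_pos.mpr hE0)
        have hMk : M / k ≤ youngInv Φ (1 / (μ E).toReal) := by
          rw [div_le_iff₀ hk0, mul_comm]
          exact ((div_lt_iff₀ hs).mp hk).le
        rw [← le_div_iff₀ hE0]
        exact (hΦ.monotoneOn (mem_Ici.2 (by positivity)) hs.le hMk).trans
          (hΦ.youngInv_mem (one_div_pos.mpr hE0).le).2

end Luxemburg

lemma luxNorm_comp_mul_right {G : Type*} [Group G] [MeasurableSpace G] [MeasurableMul G]
    (μ : Measure G) [μ.IsMulRightInvariant] (Φ : ℝ → ℝ) (f : G → ℂ) (c : G) :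
    luxNorm Φ μ (fun x => f (x * c)) = luxNorm Φ μ f := by
  simp_rw [luxNorm,
    fun k => lintegral_mul_right_eq_self (μ := μ) (fun x => ENNReal.ofReal (Φ (‖f x‖ / k))) c]

lemma phiW_succ {G : Type*} [Group G] (a : G) (w : G → ℝ) (n : ℕ) (y : G) :
    phiW a w (n + 1) y = phiW a w n y * w (y * a ^ (n + 1)) :=
  Finset.prod_Icc_succ_top (Nat.le_add_left 1 n) _

lemma wT_iterate_apply_mul_pow {G : Type*} [Group G] (a : G) (w : G → ℝ) (g : G → ℂ)
    (n : ℕ) (y : G) : (wT a w)^[n] g (y * a ^ n) = phiW a w n y * g y := by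
  induction n with
  | zero => simp [phiW]
  | succ n ih =>
    rw [phiW_succ, Function.iterate_succ_apply', wT, pow_succ, ← mul_assoc, mul_inv_cancel_right,
      ih]
    push_cast
    ring

theorem luxNorm_wT_iterate_general {G : Type*} [Group G] [TopologicalSpace G] [IsTopologicalGroup G]
    [MeasurableSpace G] [BorelSpace G]
    (μ : Measure G) [μ.IsMulRightInvariant] [IsFiniteMeasureOnCompacts μ]
    (Φ : ℝ → ℝ) (hΦ : IsYoung Φ) (a : G) (w : G → ℝ)
    (hwpos : ∀ x, 0 < w x)
    (K : Set G) (hK : IsCompact K) (E : Set G) (hE : MeasurableSet E) (hEK : E ⊆ K)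
    (f : G → ℂ)
    (C : ℝ) (hC : 0 ≤ C) (hfC : ∀ x, ‖f x‖ ≤ C)
    (n : ℕ) (D : ℝ) (hD : 0 ≤ D) (hφD : ∀ x ∈ E, phiW a w n x ≤ D) :
    luxNorm Φ μ ((wT a w)^[n] (fun x => f x * E.indicator (fun _ => (1 : ℂ)) x)) =
      luxNorm Φ μ (fun x => ((phiW a w n x : ℝ) : ℂ) * f x * E.indicator (fun _ => (1 : ℂ)) x) ∧
    luxNorm Φ μ ((wT a w)^[n] (fun x => f x * E.indicator (fun _ => (1 : ℂ)) x)) ≤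
      C * D / youngInv Φ (1 / (μ E).toReal) := by
  have hiter : luxNorm Φ μ ((wT a w)^[n] (fun x => f x * E.indicator (fun _ => (1 : ℂ)) x)) =
      luxNorm Φ μ (fun x => ((phiW a w n x : ℝ) : ℂ) * f x * E.indicator (fun _ => (1 : ℂ)) x) := by
    rw [← luxNorm_comp_mul_right μ Φ _ (a ^ n)]
    simp only [wT_iterate_apply_mul_pow, mul_assoc]
  have hμE : μ E ≠ ⊤ := ((measure_mono hEK).trans_lt hK.measure_lt_top).ne
  refine ⟨hiter, hiter ▸ luxNorm_le_of_norm_le hΦ hE hμE (mul_nonneg hC hD) (fun x hx => ?_)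
    (fun x hx => by simp [hx])⟩
  have hφ : 0 ≤ phiW a w n x := Finset.prod_nonneg fun j _ => (hwpos _).le
  rw [indicator_of_mem hx, mul_one, norm_mul, Complex.norm_real, Real.norm_of_nonneg hφ, mul_comm C]
  exact mul_le_mul (hφD x hx) (hfC x) (norm_nonneg _) hD

theorem luxNorm_wT_iterate {G : Type*} [Group G] [TopologicalSpace G] [IsTopologicalGroup G]
    [LocallyCompactSpace G] [MeasurableSpace G] [BorelSpace G]
    (μ : Measure G) [μ.IsMulRightInvariant] [IsFiniteMeasureOnCompacts μ]
    (Φ : ℝ → ℝ) (hΦ : IsYoung Φ) (a : G) (w : G → ℝ) (hw : Continuous w)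
    (hwpos : ∀ x, 0 < w x) (hwb : ∃ C : ℝ, ∀ x, w x ≤ C)
    (hwib : ∃ c : ℝ, 0 < c ∧ ∀ x, c ≤ w x)
    (K : Set G) (hK : IsCompact K) (E : Set G) (hE : MeasurableSet E) (hEK : E ⊆ K)
    (f : G → ℂ) (hf : Measurable f) (hsupp : ∀ x, x ∉ K → f x = 0)
    (C : ℝ) (hC : 0 ≤ C) (hfC : ∀ x, ‖f x‖ ≤ C)
    (n : ℕ) (D : ℝ) (hD : 0 ≤ D) (hφD : ∀ x ∈ E, phiW a w n x ≤ D) :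
    luxNorm Φ μ ((wT a w)^[n] (fun x => f x * E.indicator (fun _ => (1 : ℂ)) x)) =
      luxNorm Φ μ (fun x => ((phiW a w n x : ℝ) : ℂ) * f x * E.indicator (fun _ => (1 : ℂ)) x) ∧
    luxNorm Φ μ ((wT a w)^[n] (fun x => f x * E.indicator (fun _ => (1 : ℂ)) x)) ≤
      C * D / youngInv Φ (1 / (μ E).toReal) :=
  luxNorm_wT_iterate_general μ Φ hΦ a w hwpos K hK E hE hEK f C hC hfC n D hD hφD
end

section
/- Let G be a locally compact second countable group, a ∈ G aperiodic, w a weight with w, w⁻¹ ∈ L^∞(G), and Φ a Δ₂-regular Young function. If the weighted translation T_{a,w} is chaotic on L^Φ(G), then it is topologically multiply recurrent. -/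
open MeasureTheory Filter Set Topology

theorem orliczMultiplyRecurrent_of_densePeriodic {G : Type*} [MeasurableSpace G]
    {Φ : ℝ → ℝ} {μ : Measure G} {T : (G → ℂ) → (G → ℂ)} (hper : OrliczDensePeriodic Φ μ T) :
    OrliczMultiplyRecurrent Φ μ T := by
  intro L _ f hf ε hε
  obtain ⟨g, hg, ⟨n, hn, hgn⟩, hgf⟩ := hper f hf ε hε
  have hperiodic : Function.IsPeriodicPt T n g := hgn
  refine ⟨n, hn, g, hg, hgf, fun l _ _ => ?_⟩
  rwa [(hperiodic.const_mul l).eq]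

theorem multiplyRecurrent_of_chaotic_general {G : Type*} [Group G] [MeasurableSpace G]
    (μ : Measure G)
    (a : G) (w : G → ℝ)
    (Φ : ℝ → ℝ)
    (hper : OrliczDensePeriodic Φ μ (wT a w)) :
    OrliczMultiplyRecurrent Φ μ (wT a w) :=
  orliczMultiplyRecurrent_of_densePeriodic hper

theorem multiplyRecurrent_of_chaotic {G : Type*} [Group G] [TopologicalSpace G] [IsTopologicalGroup G]
    [LocallyCompactSpace G] [SecondCountableTopology G] [MeasurableSpace G] [BorelSpace G]
    (μ : Measure G) [μ.IsMulRightInvariant] [IsFiniteMeasureOnCompacts μ] [μ.IsOpenPosMeasure]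
    (a : G) (ha : AperiodicElem a) (w : G → ℝ) (hw : Continuous w)
    (hwpos : ∀ x, 0 < w x) (hwb : ∃ C : ℝ, ∀ x, w x ≤ C)
    (hwib : ∃ c : ℝ, 0 < c ∧ ∀ x, c ≤ w x)
    (Φ : ℝ → ℝ) (hΦ : IsYoung Φ) (hΔ : Delta2Regular G Φ)
    (htrans : OrliczTransitive Φ μ (wT a w))
    (hper : OrliczDensePeriodic Φ μ (wT a w)) :
    OrliczMultiplyRecurrent Φ μ (wT a w) :=
  multiplyRecurrent_of_chaotic_general μ a w Φ hper
end
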